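/- arXiv:0806.3706 — 4 statements merged into one kernel-verified Lean document; each statement's English description precedes it below -/
import Mathlib

section
/- Let M = (M_t)_{t≥0} be a continuous local martingale with M_0 = 0 and quadratic variation ⟨M⟩. Suppose that for some α > 0, E[exp(α ⟨M⟩_T)] < ∞. Then for any λ < √(α/2), E[exp(λ |M_T|)] < ∞. -/
/-!
Take `L = √(α/2)`. Splitting `{δ ≤ |M_T|}` according to whether `⟨M⟩_T < ρ` and choosing
`ρ = δ/(2L)`, the maximal inequality and Chernoff's bound for `⟨M⟩_T` both contribute a tail
of order `exp(-Lδ)`. By the layer cake formula, an exponential tail of rate `L` makes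
`exp(λ|M_T|)` integrable for every `λ < L`.
-/

open MeasureTheory Real ProbabilityTheory

theorem integral_mul_exp_mul (c x : ℝ) : ∫ t in (0)..x, c * exp (c * t) = exp (c * x) - 1 := by
  have hderiv : ∀ t, HasDerivAt (fun t => exp (c * t)) (c * exp (c * t)) t := fun t => by
    simpa [mul_comm] using ((hasDerivAt_id t).const_mul c).exp
  rw [intervalIntegral.integral_eq_sub_of_hasDerivAt (fun t _ => hderiv t)
    ((by fun_prop : Continuous fun t => c * exp (c * t)).intervalIntegrable _ _)]
  simp

section

variable {Ω : Type*} [MeasurableSpace Ω] {μ : Measure Ω}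

theorem lintegral_ofReal_exp_mul_abs_sub_one {X : Ω → ℝ} (hX : AEMeasurable X μ) {lam : ℝ}
    (hlam : 0 ≤ lam) :
    ∫⁻ ω, ENNReal.ofReal (exp (lam * |X ω|) - 1) ∂μ
      = ∫⁻ t in Set.Ioi 0, μ {ω | t ≤ |X ω|} * ENNReal.ofReal (lam * exp (lam * t)) := by
  simp_rw [← integral_mul_exp_mul]
  exact lintegral_comp_eq_lintegral_meas_le_mul μ (ae_of_all _ fun _ => abs_nonneg _) hX.abs
    (fun _ _ => (by fun_prop : Continuous fun t => lam * exp (lam * t)).intervalIntegrable _ _)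
    (ae_of_all _ fun _ => by positivity)

theorem integrable_exp_mul_abs_of_measure_le_exp [IsFiniteMeasure μ] {X : Ω → ℝ}
    (hX : AEMeasurable X μ) {K L lam : ℝ}
    (htail : ∀ δ > 0, μ {ω | δ ≤ |X ω|} ≤ ENNReal.ofReal (K * exp (-(L * δ))))
    (hlam : lam < L) : Integrable (fun ω => exp (lam * |X ω|)) μ := by
  rcases le_or_gt lam 0 with hlam0 | hlam0
  · refine (integrable_const (1 : ℝ)).mono' (by fun_prop) (ae_of_all _ fun ω => ?_)
    rw [norm_of_nonneg (exp_pos _).le, exp_le_one_iff]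
    exact mul_nonpos_of_nonpos_of_nonneg hlam0 (abs_nonneg _)
  have hfinite : ∫⁻ ω, ENNReal.ofReal (exp (lam * |X ω|) - 1) ∂μ < ⊤ := by
    rw [lintegral_ofReal_exp_mul_abs_sub_one hX hlam0.le]
    calc ∫⁻ t in Set.Ioi 0, μ {ω | t ≤ |X ω|} * ENNReal.ofReal (lam * exp (lam * t))
        ≤ ∫⁻ t in Set.Ioi 0, ENNReal.ofReal (K * lam * exp (-(L - lam) * t)) := by
          refine setLIntegral_mono' measurableSet_Ioi fun t ht => ?_
          calc μ {ω | t ≤ |X ω|} * ENNReal.ofReal (lam * exp (lam * t))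
              ≤ ENNReal.ofReal (K * exp (-(L * t))) * ENNReal.ofReal (lam * exp (lam * t)) := by
                gcongr; exact htail t ht
            _ = ENNReal.ofReal (K * lam * exp (-(L - lam) * t)) := by
                rw [← ENNReal.ofReal_mul' (by positivity), mul_mul_mul_comm, ← exp_add]
                ring_nf
      _ < ⊤ :=
          ((exp_neg_integrableOn_Ioi 0 (sub_pos.2 hlam)).const_mul (K * lam)).lintegral_lt_top
  have hsub : Integrable (fun ω => exp (lam * |X ω|) - 1) μ :=
    ⟨by fun_prop, (hasFiniteIntegral_iff_ofReal (ae_of_all _ fun ω => by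
      simp only [Pi.zero_apply, sub_nonneg, one_le_exp_iff]; positivity)).2 hfinite⟩
  exact (hsub.add (integrable_const 1)).congr (ae_of_all _ fun _ => sub_add_cancel _ _)

theorem measure_le_abs_le_exp_of_bernstein [IsFiniteMeasure μ] {X Y : Ω → ℝ} {α : ℝ}
    (hα : 0 < α)
    (hbern : ∀ δ ρ : ℝ, 0 < δ → 0 < ρ →
      μ {ω | δ ≤ |X ω| ∧ Y ω < ρ} ≤ ENNReal.ofReal (2 * exp (-δ ^ 2 / (2 * ρ))))
    (hY : Integrable (fun ω => exp (α * Y ω)) μ) {δ : ℝ} (hδ : 0 < δ) :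
    μ {ω | δ ≤ |X ω|} ≤ ENNReal.ofReal ((2 + mgf Y μ α) * exp (-(√(α / 2) * δ))) := by
  set L := √(α / 2)
  have hL : 0 < L := sqrt_pos.2 (by positivity)
  have hαL : α = 2 * L ^ 2 := by rw [sq_sqrt (by positivity)]; ring
  -- `ρ` balances the two tails: both exponents become `-L δ`.
  set ρ := δ / (2 * L)
  have hρ : 0 < ρ := by positivity
  have hexp₁ : -δ ^ 2 / (2 * ρ) = -(L * δ) := by simp only [ρ]; field_simp
  have hexp₂ : -α * ρ = -(L * δ) := by simp only [ρ, hαL]; field_simp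
  calc μ {ω | δ ≤ |X ω|}
      ≤ μ ({ω | δ ≤ |X ω| ∧ Y ω < ρ} ∪ {ω | ρ ≤ Y ω}) := by
        refine measure_mono fun ω hω => ?_
        rcases lt_or_ge (Y ω) ρ with h | h
        exacts [Or.inl ⟨hω, h⟩, Or.inr h]
    _ ≤ μ {ω | δ ≤ |X ω| ∧ Y ω < ρ} + μ {ω | ρ ≤ Y ω} := measure_union_le _ _
    _ ≤ ENNReal.ofReal (2 * exp (-δ ^ 2 / (2 * ρ)))
          + ENNReal.ofReal (exp (-α * ρ) * mgf Y μ α) := by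
        gcongr
        · exact hbern δ ρ hδ hρ
        · rw [← ofReal_measureReal]
          exact ENNReal.ofReal_le_ofReal (measure_ge_le_exp_mul_mgf ρ hα.le hY)
    _ = ENNReal.ofReal ((2 + mgf Y μ α) * exp (-(L * δ))) := by
        rw [hexp₁, hexp₂,
          ← ENNReal.ofReal_add (by positivity) (mul_nonneg (exp_pos _).le mgf_nonneg)]
        ring_nf

end

theorem exp_moment_of_exp_qv_general {Ω : Type*} [MeasurableSpace Ω] (μ : Measure Ω)
    [IsProbabilityMeasure μ] (T : ℝ) (hT : 0 < T) (M qv : ℝ → Ω → ℝ)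
    (hMmeas : ∀ t, Measurable (M t))
    (hmax : ∀ δ ρ : ℝ, 0 < δ → 0 < ρ →
      μ {ω | (∃ t ∈ Set.Icc (0 : ℝ) T, δ ≤ |M t ω|) ∧ qv T ω < ρ} ≤
        ENNReal.ofReal (2 * Real.exp (-δ ^ 2 / (2 * ρ))))
    (α : ℝ) (hα : 0 < α)
    (hint : Integrable (fun ω => Real.exp (α * qv T ω)) μ)
    (lam : ℝ) (hlam : lam < Real.sqrt (α / 2)) :
    Integrable (fun ω => Real.exp (lam * |M T ω|)) μ := by
  have hbern : ∀ δ ρ : ℝ, 0 < δ → 0 < ρ →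
      μ {ω | δ ≤ |M T ω| ∧ qv T ω < ρ} ≤
        ENNReal.ofReal (2 * exp (-δ ^ 2 / (2 * ρ))) := by
    intro δ ρ hδ hρ
    refine le_trans (measure_mono fun ω hω => ?_) (hmax δ ρ hδ hρ)
    exact ⟨⟨T, ⟨hT.le, le_rfl⟩, hω.1⟩, hω.2⟩
  exact integrable_exp_mul_abs_of_measure_le_exp (hMmeas T).aemeasurable
    (fun δ hδ => measure_le_abs_le_exp_of_bernstein hα hbern hint hδ) hlam

/-- For a continuous local martingale `M` vanishing at `0`, with quadratic variation `qv`
(characterized through the maximal exponential inequality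
`P(sup_{0≤t≤T} |M_t| ≥ δ, ⟨M⟩_T < ρ) ≤ 2 exp(-δ²/(2ρ))`), if `E[exp(α ⟨M⟩_T)] < ∞` for some
`α > 0`, then `E[exp(λ |M_T|)] < ∞` for any `λ < √(α/2)`. -/
theorem exp_moment_of_exp_qv {Ω : Type*} [MeasurableSpace Ω] (μ : Measure Ω)
    [IsProbabilityMeasure μ] (T : ℝ) (hT : 0 < T) (M qv : ℝ → Ω → ℝ)
    (hM0 : ∀ ω, M 0 ω = 0)
    (hMcont : ∀ ω, Continuous fun t => M t ω)
    (hMmeas : ∀ t, Measurable (M t)) (hqvmeas : Measurable (qv T))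
    (hmax : ∀ δ ρ : ℝ, 0 < δ → 0 < ρ →
      μ {ω | (∃ t ∈ Set.Icc (0 : ℝ) T, δ ≤ |M t ω|) ∧ qv T ω < ρ} ≤
        ENNReal.ofReal (2 * Real.exp (-δ ^ 2 / (2 * ρ))))
    (α : ℝ) (hα : 0 < α)
    (hint : Integrable (fun ω => Real.exp (α * qv T ω)) μ)
    (lam : ℝ) (hlam : lam < Real.sqrt (α / 2)) :
    Integrable (fun ω => Real.exp (lam * |M T ω|)) μ :=
  exp_moment_of_exp_qv_general μ T hT M qv hMmeas hmax α hα hint lam hlam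
end

section
/- Let X be a nonnegative random variable and Y a nonnegative random variable such that for every y > 0 and c > 0, P(X ≥ y, Y < c y) ≤ 2 exp(-y^{1/p}/(2 c^{1/p})), where p ∈ (0,1]. If E[exp(α Y)] < ∞ for some α > 0, then for any λ > 0 with (if p = 1) λ < √(α/2), we have E[exp(λ X)] < ∞, using the decomposition E[e^{λX}] = ∫_0^∞ P(X ≥ y) λ e^{λ y} dy ≤ ∫_0^∞ 2λ exp(λ y - y^{1/p}/(2c^{1/p})) dy + E[exp((λ/c) Y)] with c = λ/α. -/
/-!
With `c = λ / α`, the layer-cake formula gives `E[e^{λX}] = 1 + ∫_0^∞ λ e^{λt} P(X ≥ t) dt`, and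
`P(X ≥ t) ≤ P(X ≥ t, Y < ct) + P(Y ≥ ct)`. By the same formula applied to `Y / c`, the second part
integrates to at most `E[e^{λY/c}] = E[e^{αY}]`. The first part is at most
`∫_0^∞ 2λ exp(λt - t^q / (2c^q)) dt` with `q = 1/p ≥ 1`: finite because `t^q` is superlinear when
`p < 1`, and because `λ < 1/(2c)`, i.e. `λ² < α/2`, when `p = 1`.
-/

open MeasureTheory Real Set Filter

lemma integrableOn_exp_mul_sub_mul_rpow {q β lam : ℝ} (hq : 1 ≤ q) (hβ : 0 < β)
    (hlam : q = 1 → lam < β) :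
    IntegrableOn (fun t => exp (lam * t - β * t ^ q)) (Ioi 0) := by
  obtain ⟨b, hb, hdecay⟩ : ∃ b > 0, ∀ᶠ t in atTop, lam * t - β * t ^ q ≤ -b * t := by
    rcases hq.eq_or_lt with rfl | hq1
    · exact ⟨β - lam, sub_pos.2 (hlam rfl),
        Eventually.of_forall fun t => le_of_eq (by rw [rpow_one]; ring)⟩
    · refine ⟨1, one_pos, ?_⟩
      filter_upwards [(tendsto_rpow_atTop (sub_pos.2 hq1)).eventually_ge_atTop ((lam + 1) / β),
        eventually_gt_atTop 0] with t ht ht0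
      have hrpow : t ^ q = t ^ (q - 1) * t := by
        rw [← rpow_add_one ht0.ne']
        ring_nf
      rw [div_le_iff₀ hβ] at ht
      nlinarith
  have hcont : Continuous fun t => exp (lam * t - β * t ^ q) := by
    have := continuous_rpow_const (by linarith : 0 ≤ q)
    fun_prop
  refine integrable_of_isBigO_exp_neg hb hcont.continuousOn (Asymptotics.IsBigO.of_bound 1 ?_)
  filter_upwards [hdecay] with t ht
  simpa [abs_exp] using exp_le_exp.2 ht

section LayerCake

variable {Ω : Type*} [MeasurableSpace Ω] {μ : Measure Ω}

lemma lintegral_exp_mul_eq_measure_univ_add {f : Ω → ℝ} (hf : Measurable f) (hf0 : ∀ ω, 0 ≤ f ω)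
    {lam : ℝ} (hlam : 0 ≤ lam) :
    ∫⁻ ω, ENNReal.ofReal (exp (lam * f ω)) ∂μ =
      μ univ + ∫⁻ t in Ioi 0, μ {ω | t ≤ f ω} * ENNReal.ofReal (lam * exp (lam * t)) := by
  have hcont : Continuous fun t => lam * exp (lam * t) := by fun_prop
  have hderiv (t : ℝ) : HasDerivAt (fun s => exp (lam * s)) (lam * exp (lam * t)) t := by
    simpa [mul_comm] using ((hasDerivAt_id t).const_mul lam).exp
  have hprimitive (x : ℝ) : ∫ t in 0..x, lam * exp (lam * t) = exp (lam * x) - 1 := by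
    rw [intervalIntegral.integral_eq_sub_of_hasDerivAt (fun t _ => hderiv t)
      (hcont.intervalIntegrable _ _)]
    simp
  rw [← lintegral_comp_eq_lintegral_meas_le_mul μ (ae_of_all _ hf0) hf.aemeasurable
    (fun _ _ => hcont.intervalIntegrable _ _) (ae_of_all _ fun _ => by positivity), ← lintegral_one,
    ← lintegral_add_left measurable_const]
  refine lintegral_congr fun ω => ?_
  have hone : 1 ≤ exp (lam * f ω) := one_le_exp (mul_nonneg hlam (hf0 ω))
  rw [hprimitive, ← ENNReal.ofReal_one, ← ENNReal.ofReal_add zero_le_one (by linarith),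
    add_sub_cancel]

lemma integrable_exp_mul_of_setLIntegral_lt_top [IsFiniteMeasure μ] {f : Ω → ℝ}
    (hf : Measurable f) (hf0 : ∀ ω, 0 ≤ f ω) {lam : ℝ} (hlam : 0 ≤ lam)
    (h : ∫⁻ t in Ioi 0, μ {ω | t ≤ f ω} * ENNReal.ofReal (lam * exp (lam * t)) < ⊤) :
    Integrable (fun ω => exp (lam * f ω)) μ := by
  refine ⟨by fun_prop, ?_⟩
  rw [hasFiniteIntegral_iff_ofReal (ae_of_all _ fun _ => (exp_pos _).le),
    lintegral_exp_mul_eq_measure_univ_add hf hf0 hlam]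
  exact ENNReal.add_lt_top.2 ⟨measure_lt_top _ _, h⟩

lemma setLIntegral_measure_le_mul_exp_lt_top {Y : Ω → ℝ} (hY : Measurable Y)
    (hY0 : ∀ ω, 0 ≤ Y ω) {α lam : ℝ} (hα : 0 < α) (hlam : 0 < lam)
    (hint : Integrable (fun ω => exp (α * Y ω)) μ) :
    ∫⁻ t in Ioi 0, μ {ω | lam / α * t ≤ Y ω} * ENNReal.ofReal (lam * exp (lam * t)) < ⊤ := by
  have hc : 0 < lam / α := div_pos hlam hα
  have key := lintegral_exp_mul_eq_measure_univ_add (μ := μ) (hY.div_const (lam / α))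
    (fun ω => div_nonneg (hY0 ω) hc.le) hlam.le
  have hexp (ω : Ω) : lam * (Y ω / (lam / α)) = α * Y ω := by field_simp
  have hset (t : ℝ) : {ω | t ≤ Y ω / (lam / α)} = {ω | lam / α * t ≤ Y ω} := by
    ext ω
    simp only [mem_ofPred_eq, le_div_iff₀ hc, mul_comm]
  simp_rw [hexp, hset] at key
  calc _ ≤ μ univ + _ := le_add_self
    _ = _ := key.symm
    _ < ⊤ := (hasFiniteIntegral_iff_ofReal (ae_of_all _ fun _ => (exp_pos _).le)).1 hint.2

end LayerCake

lemma setLIntegral_exp_neg_rpow_mul_exp_lt_top {q c lam : ℝ} (hq : 1 ≤ q) (hc : 0 < c)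
    (hlam : q = 1 → 2 * c * lam < 1) :
    ∫⁻ t in Ioi 0, ENNReal.ofReal (2 * exp (-(t ^ q) / (2 * c ^ q))) *
      ENNReal.ofReal (lam * exp (lam * t)) < ⊤ := by
  have hcq : 0 < c ^ q := rpow_pos_of_pos hc q
  have hβ : 0 < 1 / (2 * c ^ q) := by positivity
  have hlam' : q = 1 → lam < 1 / (2 * c ^ q) := fun h => by
    rw [h, rpow_one, lt_div_iff₀ (by positivity)]
    linarith [hlam h]
  have hint := (integrableOn_exp_mul_sub_mul_rpow hq hβ hlam').const_mul (2 * lam)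
  refine lt_of_le_of_lt (setLIntegral_mono' measurableSet_Ioi fun t _ => ?_) hint.2
  calc _ = ENNReal.ofReal (2 * lam * exp (lam * t - 1 / (2 * c ^ q) * t ^ q)) := by
        rw [← ENNReal.ofReal_mul (by positivity), sub_eq_neg_add, exp_add]
        congr 1
        field_simp
    _ ≤ _ := Real.ofReal_le_enorm _

/-- Tail-splitting lemma: if `P(X ≥ y, Y < cy) ≤ 2 exp(-y^{1/p}/(2c^{1/p}))` for all `y, c > 0`,
and `E[exp(α Y)] < ∞`, then `E[exp(λ X)] < ∞` for `λ > 0` with `λ < √(α/2)` when `p = 1`. -/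
theorem exp_moment_from_tail {Ω : Type*} [MeasurableSpace Ω] (μ : Measure Ω)
    [IsProbabilityMeasure μ] (X Y : Ω → ℝ)
    (hX : Measurable X) (hY : Measurable Y)
    (hXnonneg : ∀ ω, 0 ≤ X ω) (hYnonneg : ∀ ω, 0 ≤ Y ω)
    (p : ℝ) (hp : 0 < p) (hp1 : p ≤ 1)
    (htail : ∀ y c : ℝ, 0 < y → 0 < c →
      μ {ω | y ≤ X ω ∧ Y ω < c * y} ≤
        ENNReal.ofReal (2 * Real.exp (-(y ^ (1 / p)) / (2 * c ^ (1 / p)))))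
    (α : ℝ) (hα : 0 < α)
    (hint : Integrable (fun ω => Real.exp (α * Y ω)) μ)
    (lam : ℝ) (hlam : 0 < lam) (hlam1 : p = 1 → lam < Real.sqrt (α / 2)) :
    Integrable (fun ω => Real.exp (lam * X ω)) μ := by
  set c := lam / α
  have hc : 0 < c := div_pos hlam hα
  have hq : 1 ≤ 1 / p := by rw [le_div_iff₀ hp]; linarith
  have hcritical : 1 / p = 1 → 2 * c * lam < 1 := fun h => by
    have hsq := (lt_sqrt hlam.le).1 (hlam1 (by simpa using h))
    rw [show 2 * c * lam = 2 * lam ^ 2 / α by ring, div_lt_one hα]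
    linarith
  have hsplit : ∀ t ∈ Ioi (0 : ℝ), μ {ω | t ≤ X ω} ≤
      ENNReal.ofReal (2 * exp (-(t ^ (1 / p)) / (2 * c ^ (1 / p)))) + μ {ω | c * t ≤ Y ω} :=
    fun t ht => (measure_le_inter_add_sdiff _ _ {ω | Y ω < c * t}).trans
      (add_le_add (htail t c ht hc) (measure_mono fun ω h => show c * t ≤ Y ω from not_lt.1 h.2))
  refine integrable_exp_mul_of_setLIntegral_lt_top hX hXnonneg hlam.le ?_
  calc _ ≤ ∫⁻ t in Ioi 0, (ENNReal.ofReal (2 * exp (-(t ^ (1 / p)) / (2 * c ^ (1 / p)))) +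
        μ {ω | c * t ≤ Y ω}) * ENNReal.ofReal (lam * exp (lam * t)) :=
      setLIntegral_mono' measurableSet_Ioi fun t ht => mul_le_mul_left (hsplit t ht) _
    _ = _ := by
      simp_rw [add_mul]
      exact lintegral_add_left (by fun_prop) _
    _ < ⊤ := ENNReal.add_lt_top.2 ⟨setLIntegral_exp_neg_rpow_mul_exp_lt_top hq hc hcritical,
      setLIntegral_measure_le_mul_exp_lt_top hY hYnonneg hα hlam hint⟩
end

section
/- Let B^H be a one-dimensional fractional Brownian motion with Hurst parameter H ∈ (0,1), and let 0 ≤ s < r < t. Then E[(E[B_t^H − B_s^H | F_r])²] ≥ (t−s)^{2H} − (t−r)^{2H}, where (F_u) is the natural filtration of B^H. -/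
/-!
Write `X = B_t - B_s` and `Z = B_r - B_s`. Since `Z` is `F_r`-measurable, `E[Z E[X|F_r]] = E[Z X]`,
so `0 ≤ E[(E[X|F_r] - Z)²]` gives `E[(E[X|F_r])²] ≥ 2 E[Z X] - E[Z²]`. By the covariance of
`B^H` the right-hand side is `(t-s)^{2H} - (t-r)^{2H}`.
-/

open MeasureTheory ProbabilityTheory Real NNReal

/-- The natural filtration of the process `B`: the σ-field generated by `B_u` for `0 ≤ u ≤ r`. -/
noncomputable def natSigma {Ω : Type*} (B : ℝ → Ω → ℝ) (r : ℝ) : MeasurableSpace Ω :=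
  ⨆ u ∈ Set.Icc (0 : ℝ) r, MeasurableSpace.comap (B u) inferInstance

lemma memLp_of_map_eq_gaussianReal {Ω : Type*} [MeasurableSpace Ω] {μ : Measure Ω} {f : Ω → ℝ}
    (hf : AEMeasurable f μ) {m : ℝ} {v : ℝ≥0} (h : μ.map f = gaussianReal m v) (p : ℝ≥0) :
    MemLp f p μ := by
  have hid : MemLp id p (μ.map f) := h ▸ memLp_id_gaussianReal p
  exact (memLp_map_measure_iff hid.aestronglyMeasurable hf).1 hid

section CondExp

variable {Ω : Type*} {m m0 : MeasurableSpace Ω} {μ : Measure Ω} [IsFiniteMeasure μ]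

lemma integral_mul_condExp_of_stronglyMeasurable (hm : m ≤ m0) {X Z : Ω → ℝ}
    (hZm : StronglyMeasurable[m] Z) (hX : MemLp X 2 μ) (hZ : MemLp Z 2 μ) :
    ∫ ω, Z ω * (μ[X | m]) ω ∂μ = ∫ ω, Z ω * X ω ∂μ :=
  calc ∫ ω, Z ω * (μ[X | m]) ω ∂μ = ∫ ω, (μ[Z * X | m]) ω ∂μ :=
        integral_congr_ae (condExp_mul_of_stronglyMeasurable_left hZm (hZ.integrable_mul hX)
          (hX.integrable one_le_two)).symm
    _ = ∫ ω, Z ω * X ω ∂μ := integral_condExp hm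

lemma two_mul_integral_mul_sub_integral_sq_le_integral_condExp_sq (hm : m ≤ m0) {X Z : Ω → ℝ}
    (hZm : StronglyMeasurable[m] Z) (hX : MemLp X 2 μ) (hZ : MemLp Z 2 μ) :
    2 * ∫ ω, Z ω * X ω ∂μ - ∫ ω, Z ω ^ 2 ∂μ ≤ ∫ ω, (μ[X | m]) ω ^ 2 ∂μ := by
  set Y := μ[X | m]
  have hY : MemLp Y 2 μ := hX.condExp one_le_two
  have hZY : Integrable (fun ω => Z ω * Y ω) μ := hZ.integrable_mul hY
  have hexpand : ∫ ω, (Y ω - Z ω) ^ 2 ∂μ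
      = ∫ ω, Y ω ^ 2 ∂μ - 2 * ∫ ω, Z ω * Y ω ∂μ + ∫ ω, Z ω ^ 2 ∂μ := by
    have hsq : (fun ω => (Y ω - Z ω) ^ 2)
        = fun ω => (Y ω ^ 2 - 2 * (Z ω * Y ω)) + Z ω ^ 2 := by
      ext ω; ring
    rw [hsq, integral_add _ hZ.integrable_sq, integral_sub hY.integrable_sq (hZY.const_mul 2),
      integral_const_mul]
    exact hY.integrable_sq.sub (hZY.const_mul 2)
  have hnonneg : 0 ≤ ∫ ω, (Y ω - Z ω) ^ 2 ∂μ := integral_nonneg fun ω => sq_nonneg _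
  rw [hexpand, integral_mul_condExp_of_stronglyMeasurable hm hZm hX hZ] at hnonneg
  linarith

end CondExp

lemma integral_sub_mul_sub {Ω : Type*} [MeasurableSpace Ω] {μ : Measure Ω} {X Y Z W : Ω → ℝ}
    (hX : MemLp X 2 μ) (hY : MemLp Y 2 μ) (hZ : MemLp Z 2 μ) (hW : MemLp W 2 μ) :
    ∫ ω, (X ω - Y ω) * (Z ω - W ω) ∂μ
      = ∫ ω, X ω * Z ω ∂μ - ∫ ω, X ω * W ω ∂μ - ∫ ω, Y ω * Z ω ∂μ + ∫ ω, Y ω * W ω ∂μ := by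
  simp only [sub_mul, mul_sub]
  have hXZ : Integrable (fun ω => X ω * Z ω) μ := hX.integrable_mul hZ
  have hXW : Integrable (fun ω => X ω * W ω) μ := hX.integrable_mul hW
  have hYZ : Integrable (fun ω => Y ω * Z ω) μ := hY.integrable_mul hZ
  have hYW : Integrable (fun ω => Y ω * W ω) μ := hY.integrable_mul hW
  rw [integral_sub _ _, integral_sub hXZ hYZ, integral_sub hXW hYW]
  · ring
  exacts [hXZ.sub hYZ, hXW.sub hYW]

section NatSigma

variable {Ω : Type*} {B : ℝ → Ω → ℝ}

lemma natSigma_le [m0 : MeasurableSpace Ω] (hB : ∀ t, Measurable (B t)) (r : ℝ) :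
    natSigma B r ≤ m0 :=
  iSup₂_le fun u _ => (hB u).comap_le

lemma measurable_natSigma {u r : ℝ} (hu : u ∈ Set.Icc 0 r) : Measurable[natSigma B r] (B u) :=
  Measurable.of_comap_le <| le_iSup₂ (f := fun u (_ : u ∈ Set.Icc (0 : ℝ) r) =>
    MeasurableSpace.comap (B u) inferInstance) u hu

end NatSigma

theorem fbm_condexp_sq_lower_bound_general {Ω : Type*} [m0 : MeasurableSpace Ω] (μ : Measure Ω)
    [IsProbabilityMeasure μ] (H : ℝ)
    (B : ℝ → Ω → ℝ) (hmeas : ∀ t, Measurable (B t))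
    (hgauss : ∀ (n : ℕ) (t : Fin n → ℝ) (c : Fin n → ℝ), (∀ i, 0 ≤ t i) →
      ∃ v : ℝ≥0, μ.map (fun ω => ∑ i, c i * B (t i) ω) = gaussianReal 0 v)
    (hcov : ∀ s t : ℝ, 0 ≤ s → 0 ≤ t →
      ∫ ω, B t ω * B s ω ∂μ = (t ^ (2 * H) + s ^ (2 * H) - |t - s| ^ (2 * H)) / 2)
    (s r t : ℝ) (hs : 0 ≤ s) (hsr : s < r) (hrt : r < t) :
    (t - s) ^ (2 * H) - (t - r) ^ (2 * H) ≤
      ∫ ω, ((μ[fun ω => B t ω - B s ω | natSigma B r]) ω) ^ 2 ∂μ := by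
  have hr : 0 ≤ r := hs.trans hsr.le
  have ht : 0 ≤ t := hr.trans hrt.le
  have hL2 : ∀ u, 0 ≤ u → MemLp (B u) 2 μ := fun u hu => by
    obtain ⟨v, hv⟩ := hgauss 1 (fun _ => u) (fun _ => 1) (fun _ => hu)
    simp only [Finset.univ_unique, Finset.sum_singleton, one_mul] at hv
    exact memLp_of_map_eq_gaussianReal (hmeas u).aemeasurable hv 2
  have hZm : StronglyMeasurable[natSigma B r] (fun ω => B r ω - B s ω) :=
    ((measurable_natSigma ⟨hr, le_rfl⟩).sub (measurable_natSigma ⟨hs, hsr.le⟩)).stronglyMeasurable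
  calc (t - s) ^ (2 * H) - (t - r) ^ (2 * H)
      = 2 * ∫ ω, (B r ω - B s ω) * (B t ω - B s ω) ∂μ - ∫ ω, (B r ω - B s ω) ^ 2 ∂μ := by
        simp only [sq]
        rw [integral_sub_mul_sub (hL2 r hr) (hL2 s hs) (hL2 t ht) (hL2 s hs),
          integral_sub_mul_sub (hL2 r hr) (hL2 s hs) (hL2 r hr) (hL2 s hs),
          hcov t r ht hr, hcov s r hs hr, hcov t s ht hs, hcov s s hs hs, hcov r r hr hr,
          hcov r s hr hs, abs_sub_comm r t, abs_sub_comm s t, abs_sub_comm s r,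
          abs_of_pos (sub_pos.2 hrt), abs_of_pos (sub_pos.2 (hsr.trans hrt)),
          abs_of_pos (sub_pos.2 hsr), sub_self, sub_self]
        ring
    _ ≤ _ := two_mul_integral_mul_sub_integral_sq_le_integral_condExp_sq (natSigma_le hmeas r)
        hZm ((hL2 t ht).sub (hL2 s hs)) ((hL2 r hr).sub (hL2 s hs))

/-- For a one-dimensional fractional Brownian motion `B` with Hurst parameter `H ∈ (0,1)` and
`0 ≤ s < r < t`, `E[(E[B_t − B_s | F_r])²] ≥ (t−s)^{2H} − (t−r)^{2H}`. -/
theorem fbm_condexp_sq_lower_bound {Ω : Type*} [m0 : MeasurableSpace Ω] (μ : Measure Ω)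
    [IsProbabilityMeasure μ] (H : ℝ) (hH0 : 0 < H) (hH1 : H < 1)
    (B : ℝ → Ω → ℝ) (hmeas : ∀ t, Measurable (B t))
    (hgauss : ∀ (n : ℕ) (t : Fin n → ℝ) (c : Fin n → ℝ), (∀ i, 0 ≤ t i) →
      ∃ v : ℝ≥0, μ.map (fun ω => ∑ i, c i * B (t i) ω) = gaussianReal 0 v)
    (hcov : ∀ s t : ℝ, 0 ≤ s → 0 ≤ t →
      ∫ ω, B t ω * B s ω ∂μ = (t ^ (2 * H) + s ^ (2 * H) - |t - s| ^ (2 * H)) / 2)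
    (s r t : ℝ) (hs : 0 ≤ s) (hsr : s < r) (hrt : r < t) :
    (t - s) ^ (2 * H) - (t - r) ^ (2 * H) ≤
      ∫ ω, ((μ[fun ω => B t ω - B s ω | natSigma B r]) ω) ^ 2 ∂μ :=
  fbm_condexp_sq_lower_bound_general (m0 := m0) μ H B hmeas hgauss hcov s r t hs hsr hrt
end

section
/- Suppose H < min(2/(d+1), 3/(2d)) and T > 0. Let K_H(t,s) be the Volterra kernel of fractional Brownian motion with Hurst parameter H. Then there is a constant C such that for all r ∈ (0,T], ∫_r^T ∫_r^t (t−s)^{−Hd−H} |K_H(t,r) − K_H(s,r)| ds dt ≤ C (r^{1/2−H} ∨ 1). -/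
/-!
Integrating the derivative `∂K_H/∂t (t,r) = c_H (H - 1/2) (t/r)^(H-1/2) (t-r)^(H-3/2)` from `s`
to `t` and using `(u/r)^(H-1/2) ≤ (T^(H-1/2) ∨ 1)(r^(1/2-H) ∨ 1)` for `r ≤ u ≤ T` gives
`|K_H(t,r) - K_H(s,r)| ≲ (r^(1/2-H) ∨ 1) ∫_s^t (u-r)^(H-3/2) du
  ≲ (r^(1/2-H) ∨ 1) (s-r)^(H-1/2-b) (t-s)^b`
for every `b ∈ (0,1]` with `H - 1/2 ≤ b`, by subadditivity of `x ↦ x^b`. The integrand is then at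
most `(r^(1/2-H) ∨ 1) (s-r)^α (t-s)^β` with `α = H - 1/2 - b` and `β = b - Hd - H`. The condition
on `H` is exactly what leaves room for a `b` with `α, β > -1`, and then the double integral of
`(s-r)^α (t-s)^β` over `r < s < t < T` is a Beta-type integral bounded uniformly in `r`.
-/

open MeasureTheory Real

/-- The Beta function `B(x,y) = Γ(x)Γ(y)/Γ(x+y)`. -/
noncomputable def betaFn (x y : ℝ) : ℝ := Real.Gamma x * Real.Gamma y / Real.Gamma (x + y)

/-- The Volterra kernel `K_H(t,s)` of fractional Brownian motion with Hurst parameter `H`. -/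
noncomputable def KH (H t s : ℝ) : ℝ :=
  if 1 / 2 < H then
    Real.sqrt (H * (2 * H - 1) / betaFn (2 - 2 * H) (H - 1 / 2)) * s ^ ((1 : ℝ) / 2 - H) *
      ∫ u in s..t, (u - s) ^ (H - 3 / 2) * u ^ (H - 1 / 2)
  else if H = 1 / 2 then 1
  else
    Real.sqrt (2 * H / ((1 - 2 * H) * betaFn (1 - 2 * H) (H + 1 / 2))) *
      ((t / s) ^ (H - 1 / 2) * (t - s) ^ (H - 1 / 2) -
        (H - 1 / 2) * s ^ ((1 : ℝ) / 2 - H) *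
          ∫ u in s..t, u ^ (H - 3 / 2) * (u - s) ^ (H - 1 / 2))

open Set

lemma rpow_le_two_rpow_abs_mul {x y : ℝ} (hx : 0 < x) (hxy : x / 2 ≤ y) (hyx : y ≤ x) (β : ℝ) :
    y ^ β ≤ 2 ^ |β| * x ^ β := by
  rcases le_or_gt 0 β with hβ | hβ
  · calc y ^ β ≤ x ^ β := rpow_le_rpow (by linarith) hyx hβ
      _ ≤ 2 ^ |β| * x ^ β :=
        le_mul_of_one_le_left (by positivity) (one_le_rpow (by norm_num) (abs_nonneg β))
  · calc y ^ β ≤ (x / 2) ^ β := rpow_le_rpow_of_nonpos (by positivity) hxy hβ.le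
      _ = 2 ^ |β| * x ^ β := by
        rw [div_rpow hx.le zero_le_two, abs_of_neg hβ, rpow_neg zero_le_two]
        ring

lemma rpow_mul_rpow_le_max_mul_max {r u T : ℝ} (hr : 0 < r) (hru : r ≤ u) (huT : u ≤ T) (p : ℝ) :
    r ^ (-p) * u ^ p ≤ max (r ^ (-p)) 1 * max (T ^ p) 1 := by
  rcases le_or_gt 0 p with hp | hp
  · exact mul_le_mul (le_max_left _ _)
      ((rpow_le_rpow (by linarith) huT hp).trans (le_max_left _ _))
      (rpow_nonneg (by linarith) _) (by positivity)
  · calc r ^ (-p) * u ^ p ≤ r ^ (-p) * r ^ p :=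
          mul_le_mul_of_nonneg_left (rpow_le_rpow_of_nonpos hr hru hp.le) (by positivity)
      _ = 1 := by rw [← rpow_add hr, neg_add_cancel, rpow_zero]
      _ ≤ max (r ^ (-p)) 1 * max (T ^ p) 1 :=
        one_le_mul_of_one_le_of_one_le (le_max_right _ _) (le_max_right _ _)

lemma continuousOn_rpow_sub_const {r : ℝ} {s : Set ℝ} (hs : ∀ u ∈ s, r < u) (q : ℝ) :
    ContinuousOn (fun u : ℝ => (u - r) ^ q) s :=
  (continuousOn_id.sub continuousOn_const).rpow_const fun u hu =>
    Or.inl (sub_pos.2 (hs u hu)).ne'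

lemma integral_rpow_sub_le {r s t b q : ℝ} (hrs : r < s) (hst : s ≤ t) (hb0 : 0 < b)
    (hb1 : b ≤ 1) (hqb : q ≤ b) :
    ∫ u in s..t, (u - r) ^ (q - 1) ≤ (s - r) ^ (q - b) * ((t - s) ^ b / b) := by
  have hsr : 0 < s - r := by linarith
  have hIcc : ∀ u ∈ uIcc s t, r < u := fun u hu => by
    rw [uIcc_of_le hst] at hu; exact hrs.trans_le hu.1
  have hsplit : ∀ u ∈ Icc s t, (u - r) ^ (q - 1) ≤ (s - r) ^ (q - b) * (u - r) ^ (b - 1) := by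
    intro u hu
    have hur : 0 < u - r := by linarith [hu.1]
    rw [show q - 1 = (q - b) + (b - 1) by ring, rpow_add hur]
    exact mul_le_mul_of_nonneg_right
      (rpow_le_rpow_of_nonpos hsr (by linarith [hu.1]) (by linarith)) (by positivity)
  have hsubadd : (t - r) ^ b ≤ (s - r) ^ b + (t - s) ^ b := by
    simpa using rpow_add_le_add_rpow hsr.le (sub_nonneg.2 hst) hb0.le hb1
  calc ∫ u in s..t, (u - r) ^ (q - 1)
      ≤ ∫ u in s..t, (s - r) ^ (q - b) * (u - r) ^ (b - 1) :=
        intervalIntegral.integral_mono_on hst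
          (continuousOn_rpow_sub_const hIcc _).intervalIntegrable
          (continuousOn_const.mul (continuousOn_rpow_sub_const hIcc _)).intervalIntegrable hsplit
    _ = (s - r) ^ (q - b) * (((t - r) ^ b - (s - r) ^ b) / b) := by
        rw [intervalIntegral.integral_const_mul, intervalIntegral.integral_comp_sub_right
          (fun u => u ^ (b - 1)), integral_rpow (Or.inl (by linarith)), sub_add_cancel]
    _ ≤ (s - r) ^ (q - b) * ((t - s) ^ b / b) := by gcongr; linarith

lemma lintegral_Ioc_ofReal_eq_ofReal_integral {f : ℝ → ℝ} {a b : ℝ} (hab : a ≤ b)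
    (hf : IntervalIntegrable f volume a b) (hnn : ∀ x ∈ Ioc a b, 0 ≤ f x) :
    ∫⁻ x in Ioc a b, ENNReal.ofReal (f x) = ENNReal.ofReal (∫ x in a..b, f x) := by
  rw [intervalIntegral.integral_of_le hab, ofReal_integral_eq_lintegral_ofReal
    ((intervalIntegrable_iff_integrableOn_Ioc_of_le hab).1 hf)
    ((ae_restrict_iff' measurableSet_Ioc).2 (Filter.Eventually.of_forall hnn))]

lemma lintegral_Ioc_rpow_sub_left {a b α : ℝ} (hab : a ≤ b) (hα : -1 < α) :
    ∫⁻ s in Ioc a b, ENNReal.ofReal ((s - a) ^ α) =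
      ENNReal.ofReal ((b - a) ^ (α + 1) / (α + 1)) := by
  have hf : IntervalIntegrable (fun s => (s - a) ^ α) volume a b := by
    simpa using
      (intervalIntegral.intervalIntegrable_rpow' hα (a := a - a) (b := b - a)).comp_sub_right a
  rw [lintegral_Ioc_ofReal_eq_ofReal_integral hab hf fun s hs => rpow_nonneg (by linarith [hs.1]) _,
    intervalIntegral.integral_comp_sub_right (fun x => x ^ α), integral_rpow (Or.inl hα),
    sub_self, zero_rpow (by linarith), sub_zero]

lemma lintegral_Ioc_rpow_sub_right {a b β : ℝ} (hab : a ≤ b) (hβ : -1 < β) :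
    ∫⁻ s in Ioc a b, ENNReal.ofReal ((b - s) ^ β) =
      ENNReal.ofReal ((b - a) ^ (β + 1) / (β + 1)) := by
  have hf : IntervalIntegrable (fun s => (b - s) ^ β) volume a b := by
    simpa using
      (intervalIntegral.intervalIntegrable_rpow' hβ (a := b - a) (b := b - b)).comp_sub_left b
  rw [lintegral_Ioc_ofReal_eq_ofReal_integral hab hf fun s hs => rpow_nonneg (by linarith [hs.2]) _,
    intervalIntegral.integral_comp_sub_left (fun x => x ^ β), integral_rpow (Or.inl hβ),
    sub_self, zero_rpow (by linarith), sub_zero]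

/- On each half of `(r, t]` one of the two factors stays comparable to its value at distance
`t - r`, and the other one is integrated exactly. -/
lemma lintegral_rpow_sub_mul_rpow_sub_le {r t α β : ℝ} (hrt : r ≤ t) (hα : -1 < α)
    (hβ : -1 < β) :
    ∫⁻ s in Ioc r t, ENNReal.ofReal ((s - r) ^ α * (t - s) ^ β) ≤
      ENNReal.ofReal ((2 ^ |β| / (α + 1) + 2 ^ |α| / (β + 1)) * (t - r) ^ (α + β + 1)) := by
  rcases hrt.eq_or_lt with rfl | hrt
  · simp
  set m := (r + t) / 2 with hm
  set x := t - r with hx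
  have hx_pos : 0 < x := sub_pos.2 hrt
  have hα1 : 0 < α + 1 := by linarith
  have hβ1 : 0 < β + 1 := by linarith
  have hrm : r ≤ m := by linarith
  have hmt : m ≤ t := by linarith
  have hleft : ∫⁻ s in Ioc r m, ENNReal.ofReal ((s - r) ^ α * (t - s) ^ β) ≤
      ENNReal.ofReal (2 ^ |β| * x ^ β) * ENNReal.ofReal (x ^ (α + 1) / (α + 1)) := calc
    _ ≤ ∫⁻ s in Ioc r m, ENNReal.ofReal (2 ^ |β| * x ^ β) * ENNReal.ofReal ((s - r) ^ α) := by
        refine setLIntegral_mono' measurableSet_Ioc fun s hs => ?_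
        rw [← ENNReal.ofReal_mul (by positivity), mul_comm]
        exact ENNReal.ofReal_le_ofReal (mul_le_mul_of_nonneg_right
          (rpow_le_two_rpow_abs_mul hx_pos (by linarith [hs.2]) (by linarith [hs.1]) β)
          (rpow_nonneg (by linarith [hs.1]) _))
    _ = ENNReal.ofReal (2 ^ |β| * x ^ β) * ENNReal.ofReal ((m - r) ^ (α + 1) / (α + 1)) := by
        rw [lintegral_const_mul' _ _ ENNReal.ofReal_ne_top, lintegral_Ioc_rpow_sub_left hrm hα]
    _ ≤ _ := by gcongr; linarith
  have hright : ∫⁻ s in Ioc m t, ENNReal.ofReal ((s - r) ^ α * (t - s) ^ β) ≤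
      ENNReal.ofReal (2 ^ |α| * x ^ α) * ENNReal.ofReal (x ^ (β + 1) / (β + 1)) := calc
    _ ≤ ∫⁻ s in Ioc m t, ENNReal.ofReal (2 ^ |α| * x ^ α) * ENNReal.ofReal ((t - s) ^ β) := by
        refine setLIntegral_mono' measurableSet_Ioc fun s hs => ?_
        rw [← ENNReal.ofReal_mul (by positivity)]
        exact ENNReal.ofReal_le_ofReal (mul_le_mul_of_nonneg_right
          (rpow_le_two_rpow_abs_mul hx_pos (by linarith [hs.1]) (by linarith [hs.2]) α)
          (rpow_nonneg (by linarith [hs.2]) _))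
    _ = ENNReal.ofReal (2 ^ |α| * x ^ α) * ENNReal.ofReal ((t - m) ^ (β + 1) / (β + 1)) := by
        rw [lintegral_const_mul' _ _ ENNReal.ofReal_ne_top, lintegral_Ioc_rpow_sub_right hmt hβ]
    _ ≤ _ := by gcongr; linarith
  have hpow₁ : x ^ β * x ^ (α + 1) = x ^ (α + β + 1) := by rw [← rpow_add hx_pos]; ring_nf
  have hpow₂ : x ^ α * x ^ (β + 1) = x ^ (α + β + 1) := by rw [← rpow_add hx_pos]; ring_nf
  rw [← Ioc_union_Ioc_eq_Ioc hrm hmt,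
    lintegral_union measurableSet_Ioc (Ioc_disjoint_Ioc_of_le le_rfl)]
  refine (add_le_add hleft hright).trans_eq ?_
  rw [← ENNReal.ofReal_mul (by positivity), ← ENNReal.ofReal_mul (by positivity),
    ← ENNReal.ofReal_add (by positivity) (by positivity)]
  congr 1
  linear_combination (2 ^ |β| / (α + 1)) * hpow₁ + (2 ^ |α| / (β + 1)) * hpow₂

lemma exists_lintegral_lintegral_rpow_le {α β T : ℝ} (hα : -1 < α) (hβ : -1 < β) (hT : 0 < T) :
    ∃ B > 0, ∀ r, 0 ≤ r → r ≤ T →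
      ∫⁻ t in Ioc r T, ∫⁻ s in Ioc r t, ENNReal.ofReal ((s - r) ^ α * (t - s) ^ β) ≤
        ENNReal.ofReal B := by
  set c := 2 ^ |β| / (α + 1) + 2 ^ |α| / (β + 1)
  have hc : 0 < c :=
    add_pos (div_pos (by positivity) (by linarith)) (div_pos (by positivity) (by linarith))
  refine ⟨c * (T ^ (α + β + 1 + 1) / (α + β + 1 + 1)),
    mul_pos hc (div_pos (rpow_pos_of_pos hT _) (by linarith)), fun r hr hrT => ?_⟩
  calc _ ≤ ∫⁻ t in Ioc r T, ENNReal.ofReal c * ENNReal.ofReal ((t - r) ^ (α + β + 1)) :=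
        setLIntegral_mono' measurableSet_Ioc fun t ht => by
          rw [← ENNReal.ofReal_mul hc.le]
          exact lintegral_rpow_sub_mul_rpow_sub_le ht.1.le hα hβ
    _ = ENNReal.ofReal c * ENNReal.ofReal ((T - r) ^ (α + β + 1 + 1) / (α + β + 1 + 1)) := by
        rw [lintegral_const_mul' _ _ ENNReal.ofReal_ne_top,
          lintegral_Ioc_rpow_sub_left hrT (by linarith)]
    _ ≤ _ := by
        rw [← ENNReal.ofReal_mul hc.le]
        gcongr <;> linarith

lemma intervalIntegrable_rpow_mul_rpow_sub {r t : ℝ} (hr : 0 < r) (hrt : r ≤ t) (e : ℝ) {q : ℝ}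
    (hq : -1 < q) : IntervalIntegrable (fun u => u ^ e * (u - r) ^ q) volume r t := by
  have hsub : IntervalIntegrable (fun u => (u - r) ^ q) volume r t := by
    simpa using
      (intervalIntegral.intervalIntegrable_rpow' hq (a := r - r) (b := t - r)).comp_sub_right r
  refine hsub.continuousOn_mul (continuousOn_id.rpow_const fun u hu => Or.inl ?_)
  rw [uIcc_of_le hrt] at hu
  exact (hr.trans_le hu.1).ne'

lemma rpow_mul_rpow_sub_sub_eq_integral {r s t : ℝ} (hr : 0 < r) (hrs : r < s) (hst : s ≤ t)
    (p : ℝ) :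
    t ^ p * (t - r) ^ p - s ^ p * (s - r) ^ p =
      p * (∫ u in s..t, u ^ (p - 1) * (u - r) ^ p) +
        p * ∫ u in s..t, u ^ p * (u - r) ^ (p - 1) := by
  have hIcc : ∀ u ∈ uIcc s t, r < u := fun u hu => by
    rw [uIcc_of_le hst] at hu; exact hrs.trans_le hu.1
  have hpos : ∀ u ∈ uIcc s t, u ≠ 0 := fun u hu => (hr.trans (hIcc u hu)).ne'
  have hcont : ∀ e : ℝ, ContinuousOn (fun u : ℝ => u ^ e) (uIcc s t) := fun e =>
    continuousOn_id.rpow_const fun u hu => Or.inl (hpos u hu)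
  have hderiv : ∀ u ∈ uIcc s t, HasDerivAt (fun u => u ^ p * (u - r) ^ p)
      (p * u ^ (p - 1) * (u - r) ^ p + u ^ p * (p * (u - r) ^ (p - 1))) u := fun u hu => by
    have h₁ := (hasDerivAt_id' u).rpow_const (p := p) (Or.inl (hpos u hu))
    have h₂ := ((hasDerivAt_id' u).sub_const r).rpow_const (p := p)
      (Or.inl (sub_pos.2 (hIcc u hu)).ne')
    simpa only [one_mul] using h₁.fun_mul h₂
  have hi₁ : IntervalIntegrable (fun u => p * u ^ (p - 1) * (u - r) ^ p) volume s t :=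
    ((continuousOn_const.mul (hcont _)).mul
      (continuousOn_rpow_sub_const hIcc _)).intervalIntegrable
  have hi₂ : IntervalIntegrable (fun u => u ^ p * (p * (u - r) ^ (p - 1))) volume s t :=
    ((hcont _).mul
      (continuousOn_const.mul (continuousOn_rpow_sub_const hIcc _))).intervalIntegrable
  rw [← intervalIntegral.integral_eq_sub_of_hasDerivAt hderiv (hi₁.add hi₂),
    intervalIntegral.integral_add hi₁ hi₂, ← intervalIntegral.integral_const_mul,
    ← intervalIntegral.integral_const_mul]
  congr 1 <;> exact intervalIntegral.integral_congr fun u _ => by ring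

/- For `H < 1/2` the kernel is written in integrated-by-parts form; differentiating
`u ↦ u^p (u-r)^p` with `p = H - 1/2` undoes the integration by parts. -/
lemma exists_KH_sub_KH_eq {H : ℝ} (hH : -1 / 2 < H) :
    ∃ κ : ℝ, ∀ r s t : ℝ, 0 < r → r < s → s ≤ t →
      KH H t r - KH H s r =
        κ * (r ^ ((1 : ℝ) / 2 - H) * ∫ u in s..t, u ^ (H - 1 / 2) * (u - r) ^ (H - 3 / 2)) := by
  rcases lt_trichotomy H (1 / 2) with hlt | rfl | hgt
  · set c := √(2 * H / ((1 - 2 * H) * betaFn (1 - 2 * H) (H + 1 / 2)))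
    refine ⟨c * (H - 1 / 2), fun r s t hr hrs hst => ?_⟩
    have hint : ∀ a, r ≤ a → IntervalIntegrable
        (fun u => u ^ (H - 3 / 2) * (u - r) ^ (H - 1 / 2)) volume r a :=
      fun a hra => intervalIntegrable_rpow_mul_rpow_sub hr hra _ (by linarith)
    have hdiv : ∀ a, 0 ≤ a → (a / r) ^ (H - 1 / 2) = a ^ (H - 1 / 2) * r ^ ((1 : ℝ) / 2 - H) :=
      fun a ha => by rw [div_rpow ha hr.le, div_eq_mul_inv, ← rpow_neg hr.le, neg_sub]
    have hftc := rpow_mul_rpow_sub_sub_eq_integral hr hrs hst (H - 1 / 2)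
    rw [show H - 1 / 2 - 1 = H - 3 / 2 by ring] at hftc
    have hsub := intervalIntegral.integral_interval_sub_left (hint t (by linarith)) (hint s hrs.le)
    simp only [KH, if_neg (not_lt.2 hlt.le), if_neg hlt.ne]
    rw [hdiv t (by linarith), hdiv s (by linarith)]
    linear_combination (c * r ^ ((1 : ℝ) / 2 - H)) * (hftc - (H - 1 / 2) * hsub)
  · exact ⟨0, fun r s t _ _ _ => by simp [KH]⟩
  · refine ⟨√(H * (2 * H - 1) / betaFn (2 - 2 * H) (H - 1 / 2)), fun r s t hr hrs hst => ?_⟩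
    have hint : ∀ a, r ≤ a → IntervalIntegrable
        (fun u => u ^ (H - 1 / 2) * (u - r) ^ (H - 3 / 2)) volume r a :=
      fun a hra => intervalIntegrable_rpow_mul_rpow_sub hr hra _ (by linarith)
    simp only [KH, if_pos hgt, mul_comm ((_ - r) ^ (H - 3 / 2))]
    rw [← mul_sub, intervalIntegral.integral_interval_sub_left (hint t (by linarith))
      (hint s hrs.le), mul_assoc]

lemma abs_KH_sub_KH_le {H b : ℝ} (T : ℝ) (hH : -1 / 2 < H) (hb0 : 0 < b) (hb1 : b ≤ 1)
    (hHb : H - 1 / 2 ≤ b) :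
    ∃ A > 0, ∀ r s t : ℝ, 0 < r → r < s → s ≤ t → t ≤ T →
      |KH H t r - KH H s r| ≤
        A * max (r ^ ((1 : ℝ) / 2 - H)) 1 * ((s - r) ^ (H - 1 / 2 - b) * (t - s) ^ b) := by
  obtain ⟨κ, hκ⟩ := exists_KH_sub_KH_eq hH
  set M := max (T ^ (H - 1 / 2)) 1
  refine ⟨(|κ| + 1) * M / b, by positivity, fun r s t hr hrs hst htT => ?_⟩
  set Mr := max (r ^ ((1 : ℝ) / 2 - H)) 1
  have hIcc : ∀ u ∈ uIcc s t, r < u := fun u hu => by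
    rw [uIcc_of_le hst] at hu; exact hrs.trans_le hu.1
  have hcont : ContinuousOn (fun u : ℝ => u ^ (H - 1 / 2)) (uIcc s t) :=
    continuousOn_id.rpow_const fun u hu => Or.inl (hr.trans (hIcc u hu)).ne'
  have hweight :
      r ^ ((1 : ℝ) / 2 - H) * ∫ u in s..t, u ^ (H - 1 / 2) * (u - r) ^ (H - 3 / 2) ≤
        Mr * M * ∫ u in s..t, (u - r) ^ (H - 3 / 2) := by
    rw [← intervalIntegral.integral_const_mul, ← intervalIntegral.integral_const_mul]
    refine intervalIntegral.integral_mono_on hst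
      (continuousOn_const.mul (hcont.mul (continuousOn_rpow_sub_const hIcc _))).intervalIntegrable
      (continuousOn_const.mul (continuousOn_rpow_sub_const hIcc _)).intervalIntegrable
      fun u hu => ?_
    rw [← mul_assoc]
    refine mul_le_mul_of_nonneg_right ?_ (rpow_nonneg (by linarith [hu.1]) _)
    simpa only [neg_sub] using
      rpow_mul_rpow_le_max_mul_max hr (hrs.le.trans hu.1) (hu.2.trans htT) (H - 1 / 2)
  have hsing :
      ∫ u in s..t, (u - r) ^ (H - 3 / 2) ≤ (s - r) ^ (H - 1 / 2 - b) * ((t - s) ^ b / b) := by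
    simpa only [show H - 1 / 2 - 1 = H - 3 / 2 by ring] using
      integral_rpow_sub_le hrs hst hb0 hb1 hHb
  have hnn : 0 ≤ r ^ ((1 : ℝ) / 2 - H) * ∫ u in s..t, u ^ (H - 1 / 2) * (u - r) ^ (H - 3 / 2) :=
    mul_nonneg (rpow_nonneg hr.le _) (intervalIntegral.integral_nonneg hst fun u hu =>
      mul_nonneg (rpow_nonneg (by linarith [hu.1]) _) (rpow_nonneg (by linarith [hu.1]) _))
  calc |KH H t r - KH H s r|
      = |κ| * (r ^ ((1 : ℝ) / 2 - H) *
          ∫ u in s..t, u ^ (H - 1 / 2) * (u - r) ^ (H - 3 / 2)) := by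
        rw [hκ r s t hr hrs hst, abs_mul, abs_of_nonneg hnn]
    _ ≤ (|κ| + 1) * (Mr * M * ((s - r) ^ (H - 1 / 2 - b) * ((t - s) ^ b / b))) :=
        mul_le_mul (by linarith) (hweight.trans (by gcongr)) hnn (by positivity)
    _ = (|κ| + 1) * M / b * Mr * ((s - r) ^ (H - 1 / 2 - b) * (t - s) ^ b) := by
        field_simp

theorem exists_lintegral_KH_increment_le {H p b T : ℝ} (hT : 0 < T) (hb0 : 0 < b) (hb1 : b ≤ 1)
    (hHb : H - 1 / 2 ≤ b) (hbH : b < H + 1 / 2) (hpb : p - 1 < b) :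
    ∃ C > 0, ∀ r ∈ Ioc (0 : ℝ) T,
      ∫⁻ t in Ioc r T, ∫⁻ s in Ioc r t,
          ENNReal.ofReal ((t - s) ^ (-p) * |KH H t r - KH H s r|) ≤
        ENNReal.ofReal (C * max (r ^ ((1 : ℝ) / 2 - H)) 1) := by
  obtain ⟨A, hA, hK⟩ := abs_KH_sub_KH_le T (by linarith) hb0 hb1 hHb
  obtain ⟨B, hB, hBeta⟩ := exists_lintegral_lintegral_rpow_le (α := H - 1 / 2 - b) (β := b - p)
    (by linarith) (by linarith) hT
  refine ⟨A * B, mul_pos hA hB, fun r ⟨hr, hrT⟩ => ?_⟩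
  set Mr := max (r ^ ((1 : ℝ) / 2 - H)) 1
  have hpoint : ∀ t ∈ Ioc r T, ∀ s ∈ Ioc r t, (t - s) ^ (-p) * |KH H t r - KH H s r| ≤
      A * Mr * ((s - r) ^ (H - 1 / 2 - b) * (t - s) ^ (b - p)) := by
    rintro t ⟨-, htT⟩ s ⟨hrs, hst⟩
    rcases hst.eq_or_lt with rfl | hst
    · simp only [sub_self, abs_zero, mul_zero]
      positivity
    calc (t - s) ^ (-p) * |KH H t r - KH H s r|
        ≤ (t - s) ^ (-p) * (A * Mr * ((s - r) ^ (H - 1 / 2 - b) * (t - s) ^ b)) :=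
          mul_le_mul_of_nonneg_left (hK r s t hr hrs hst.le htT) (by positivity)
      _ = A * Mr * ((s - r) ^ (H - 1 / 2 - b) * (t - s) ^ (b - p)) := by
          rw [sub_eq_neg_add b, rpow_add (sub_pos.2 hst)]
          ring
  calc _ ≤ ∫⁻ t in Ioc r T, ∫⁻ s in Ioc r t, ENNReal.ofReal (A * Mr) *
          ENNReal.ofReal ((s - r) ^ (H - 1 / 2 - b) * (t - s) ^ (b - p)) :=
        setLIntegral_mono' measurableSet_Ioc fun t ht =>
          setLIntegral_mono' measurableSet_Ioc fun s hs => by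
            rw [← ENNReal.ofReal_mul (by positivity)]
            exact ENNReal.ofReal_le_ofReal (hpoint t ht s hs)
    _ = ENNReal.ofReal (A * Mr) * ∫⁻ t in Ioc r T, ∫⁻ s in Ioc r t,
          ENNReal.ofReal ((s - r) ^ (H - 1 / 2 - b) * (t - s) ^ (b - p)) := by
        simp_rw [lintegral_const_mul' _ _ ENNReal.ofReal_ne_top]
    _ ≤ ENNReal.ofReal (A * Mr) * ENNReal.ofReal B := by gcongr; exact hBeta r hr.le hrT
    _ = ENNReal.ofReal (A * B * Mr) := by
        rw [← ENNReal.ofReal_mul (by positivity)]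
        ring_nf

/-- If `H < min(2/(d+1), 3/(2d))` then
`∫_r^T ∫_r^t (t−s)^{−Hd−H} |K_H(t,r) − K_H(s,r)| ds dt ≤ C (r^{1/2−H} ∨ 1)`. -/
theorem KH_increment_integral_bound (H : ℝ) (d : ℕ) (hd : 1 ≤ d) (hH0 : 0 < H)
    (hH : H < min (2 / ((d : ℝ) + 1)) (3 / (2 * (d : ℝ)))) (T : ℝ) (hT : 0 < T) :
    ∃ C > 0, ∀ r ∈ Set.Ioc (0 : ℝ) T,
      (∫⁻ t in Set.Ioc r T, ∫⁻ s in Set.Ioc r t,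
          ENNReal.ofReal ((t - s) ^ (-(H * d) - H) * |KH H t r - KH H s r|)) ≤
        ENNReal.ofReal (C * max (r ^ ((1 : ℝ) / 2 - H)) 1) := by
  have hd' : (1 : ℝ) ≤ d := by exact_mod_cast hd
  have h₁ : H * d + H < 2 := by
    have := (lt_div_iff₀ (by positivity)).1 (hH.trans_le (min_le_left _ _))
    linarith
  have h₂ : H * d < 3 / 2 := by
    have := (lt_div_iff₀ (by positivity)).1 (hH.trans_le (min_le_right _ _))
    linarith
  obtain ⟨b, hb_lo, hb_hi⟩ : ∃ b, max (max (H - 1 / 2) (H * d + H - 1)) 0 < b ∧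
      b < min 1 (H + 1 / 2) :=
    exists_between (max_lt (max_lt (lt_min (by nlinarith) (by linarith))
      (lt_min (by linarith) (by linarith))) (lt_min one_pos (by linarith)))
  simp only [max_lt_iff, lt_min_iff] at hb_lo hb_hi
  simpa only [neg_add'] using exists_lintegral_KH_increment_le (H := H) (p := H * d + H) hT
    hb_lo.2 hb_hi.1.le hb_lo.1.1.le hb_hi.2 (by linarith)
end
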